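/- For a > 0 and y ∈ ℝ, the sum Σ_{t∈ℤ} e^{−a²t²} e^{iyt} is real, positive, and attains its maximum over y at y = 0 (modulo 2π); more precisely it equals Σ_{t∈ℤ} e^{−a²t²} cos(yt), which is maximized when y ≡ 0 (mod 2π). -/

import Mathlib

/-!
Poisson summation (Jacobi's theta transformation) turns `∑ₜ exp(-b t² + i y t)` into
`√(π / b) ∑ₙ exp(-(π² / b) (n - y / 2π)²)`, which is real and positive; its real part is the
cosine sum. The comparison with `y = 0` holds for any summable nonnegative weights:
`cos (y t) ≤ 1`, strictly at `t = 1` unless `y ∈ 2πℤ`.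
-/

open Real

theorem summable_mul_cos {w : ℤ → ℝ} (hw : Summable w) (y : ℝ) :
    Summable fun t : ℤ ↦ w t * cos (y * t) :=
  hw.norm.of_norm_bounded fun t ↦ by
    simpa only [norm_mul, Real.norm_eq_abs] using
      mul_le_of_le_one_right (abs_nonneg (w t)) (abs_cos_le_one _)

theorem tsum_mul_cos_le_tsum {w : ℤ → ℝ} (hw : Summable w) (hw₀ : ∀ t, 0 ≤ w t) (y : ℝ) :
    ∑' t : ℤ, w t * cos (y * t) ≤ ∑' t : ℤ, w t :=
  (summable_mul_cos hw y).tsum_le_tsum (fun t ↦ mul_le_of_le_one_right (hw₀ t) (cos_le_one _)) hw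

theorem tsum_mul_cos_eq_tsum_iff {w : ℤ → ℝ} (hw : Summable w) (hw₀ : ∀ t, 0 ≤ w t)
    (hw₁ : 0 < w 1) (y : ℝ) :
    ∑' t : ℤ, w t * cos (y * t) = ∑' t : ℤ, w t ↔ ∃ k : ℤ, y = 2 * π * k := by
  constructor
  · intro h
    by_contra! hy
    have hcos : cos y < 1 := (cos_le_one y).lt_of_ne fun h1 ↦ by
      obtain ⟨k, hk⟩ := (cos_eq_one_iff y).mp h1
      exact hy k (by rw [← hk]; ring)
    refine h.not_lt ((summable_mul_cos hw y).tsum_lt_tsum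
      (fun t ↦ mul_le_of_le_one_right (hw₀ t) (cos_le_one _)) (i := 1) ?_ hw)
    simpa using mul_lt_of_lt_one_right hw₁ hcos
  · rintro ⟨k, rfl⟩
    refine tsum_congr fun t ↦ ?_
    rw [show 2 * π * k * t = (k * t : ℤ) * (2 * π) by push_cast; ring, cos_int_mul_two_pi, mul_one]

theorem summable_exp_neg_mul_add_sq {b : ℝ} (hb : 0 < b) (d : ℝ) :
    Summable fun n : ℤ ↦ rexp (-b * (n + d) ^ 2) := by
  refine (HurwitzKernelBounds.summable_f_int 0 d (div_pos hb pi_pos)).congr fun n ↦ ?_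
  rw [HurwitzKernelBounds.f_int, pow_zero, one_mul]
  congr 1
  field_simp [pi_ne_zero]

theorem summable_exp_neg_mul_sq {b : ℝ} (hb : 0 < b) :
    Summable fun n : ℤ ↦ rexp (-b * n ^ 2) := by
  simpa using summable_exp_neg_mul_add_sq hb 0

open Complex

theorem tsum_cexp_neg_mul_sq_add_mul_I {b : ℝ} (hb : 0 < b) (y : ℝ) :
    ∑' t : ℤ, cexp ((-b * t ^ 2 : ℝ) + (y * t : ℝ) * I)
      = (√(π / b) * ∑' n : ℤ, rexp (-(π ^ 2 / b) * (n - y / (2 * π)) ^ 2) : ℝ) := by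
  have hpoisson := tsum_exp_neg_quadratic (a := ((b / π : ℝ) : ℂ))
    (by rw [ofReal_re]; positivity) (I * (y / (2 * π)))
  have hcoef : 1 / ((b / π : ℝ) : ℂ) ^ (1 / 2 : ℂ) = (√(π / b) : ℝ) := by
    rw [show (1 / 2 : ℂ) = ((1 / 2 : ℝ) : ℂ) by norm_num, ← ofReal_cpow (by positivity),
      ← sqrt_eq_rpow, ← ofReal_one, ← ofReal_div, one_div, ← Real.sqrt_inv, inv_div]
  rw [hcoef] at hpoisson
  rw [ofReal_mul, ofReal_tsum]
  refine (tsum_congr fun n ↦ ?_).trans (hpoisson.trans (congrArg _ (tsum_congr fun n ↦ ?_)))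
  · congr 1
    push_cast
    field_simp
  · rw [ofReal_exp]
    congr 1
    push_cast
    field_simp
    ring_nf
    simp only [I_sq, I_pow_four]
    ring_nf

theorem tsum_exp_neg_mul_sq_mul_cos {b : ℝ} (hb : 0 < b) (y : ℝ) :
    ∑' t : ℤ, rexp (-b * t ^ 2) * Real.cos (y * t)
      = √(π / b) * ∑' n : ℤ, rexp (-(π ^ 2 / b) * (n - y / (2 * π)) ^ 2) := by
  have hsum : Summable fun t : ℤ ↦ cexp ((-b * t ^ 2 : ℝ) + (y * t : ℝ) * I) :=
    Summable.of_norm <| (summable_exp_neg_mul_sq hb).congr fun t ↦ by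
      simp only [norm_exp, add_re, ofReal_re, mul_I_re, ofReal_im, neg_zero, add_zero]
  rw [← ofReal_re (_ * _), ← tsum_cexp_neg_mul_sq_add_mul_I hb, re_tsum hsum]
  refine tsum_congr fun t ↦ ?_
  rw [Complex.exp_add, ← ofReal_exp, re_ofReal_mul, exp_ofReal_mul_I_re]

theorem tsum_exp_neg_mul_sq_mul_cos_pos {b : ℝ} (hb : 0 < b) (y : ℝ) :
    0 < ∑' t : ℤ, rexp (-b * t ^ 2) * Real.cos (y * t) := by
  rw [tsum_exp_neg_mul_sq_mul_cos hb]
  exact mul_pos (sqrt_pos.mpr (div_pos pi_pos hb))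
    ((summable_exp_neg_mul_add_sq (by positivity) _).tsum_pos (fun _ ↦ (exp_pos _).le) 0
      (exp_pos _))

/-- Σ_{t∈ℤ} e^{−a²t²} e^{iyt} is real and positive, equals
Σ_t e^{−a²t²} cos(yt), which is maximized exactly when y ≡ 0 (mod 2π). -/
theorem gaussian_theta_sum (a : ℝ) (ha : 0 < a) (y : ℝ) :
    (∑' t : ℤ, Complex.exp (((-(a ^ 2) * (t : ℝ) ^ 2 : ℝ) : ℂ) + (((y * t : ℝ)) : ℂ) * I))
      = ((∑' t : ℤ, Real.exp (-(a ^ 2) * (t : ℝ) ^ 2) * Real.cos (y * t) : ℝ) : ℂ)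
    ∧ 0 < ∑' t : ℤ, Real.exp (-(a ^ 2) * (t : ℝ) ^ 2) * Real.cos (y * t)
    ∧ (∑' t : ℤ, Real.exp (-(a ^ 2) * (t : ℝ) ^ 2) * Real.cos (y * t))
        ≤ ∑' t : ℤ, Real.exp (-(a ^ 2) * (t : ℝ) ^ 2)
    ∧ ((∑' t : ℤ, Real.exp (-(a ^ 2) * (t : ℝ) ^ 2) * Real.cos (y * t))
          = (∑' t : ℤ, Real.exp (-(a ^ 2) * (t : ℝ) ^ 2))
        ↔ ∃ k : ℤ, y = 2 * Real.pi * k) := by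
  have hb : 0 < a ^ 2 := by positivity
  have hw := summable_exp_neg_mul_sq hb
  have hw₀ (t : ℤ) : 0 ≤ rexp (-(a ^ 2) * (t : ℝ) ^ 2) := (exp_pos _).le
  refine ⟨?_, tsum_exp_neg_mul_sq_mul_cos_pos hb y, tsum_mul_cos_le_tsum hw hw₀ y,
    tsum_mul_cos_eq_tsum_iff hw hw₀ (exp_pos _) y⟩
  rw [tsum_cexp_neg_mul_sq_add_mul_I hb, tsum_exp_neg_mul_sq_mul_cos hb]
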